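/- If the increments X_i are i.i.d., symmetric, with continuous (atomless) distribution, then P(τ_0 > n) = (-1)^n * binom(-1/2, n) for all n ≥ 0, where τ_0 = inf{n ≥ 1 : S_n ≤ 0} and S_n = X_1 + ⋯ + X_n. -/

import Mathlib

open MeasureTheory ProbabilityTheory
open scoped ENNReal

/-- `a n^{(1)} = (-1)^n * C(-1/2, n)`. -/
noncomputable def aOne (n : ℕ) : ℝ :=
  (-1 : ℝ) ^ n * (∏ i ∈ Finset.range n, ((-1 : ℝ) / 2 - i)) / (Nat.factorial n)

/-! ### Combinatorial part: the convolution identity for `aOne` -/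

lemma aOne_zero : aOne 0 = 1 := by simp [aOne]

lemma aOne_succ (k : ℕ) : ((k : ℝ) + 1) * aOne (k + 1) = ((k : ℝ) + 1/2) * aOne k := by
  have h1 : (Nat.factorial (k+1) : ℝ) = (k+1) * Nat.factorial k := by
    push_cast [Nat.factorial_succ]; ring
  have h2 : (Nat.factorial k : ℝ) ≠ 0 := Nat.cast_ne_zero.2 (Nat.factorial_ne_zero k)
  have h3 : (k : ℝ) + 1 ≠ 0 := by positivity
  unfold aOne
  rw [Finset.prod_range_succ, h1]
  field_simp
  ring

noncomputable def convT (m : ℕ) : ℝ := ∑ k ∈ Finset.range (m+1), aOne k * aOne (m-k)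
noncomputable def convU (m : ℕ) : ℝ := ∑ k ∈ Finset.range (m+1), (k : ℝ) * aOne k * aOne (m-k)

lemma convU_refl (m : ℕ) :
    convU m = ∑ k ∈ Finset.range (m+1), ((m : ℝ) - k) * aOne k * aOne (m-k) := by
  rw [convU, ← Finset.sum_range_reflect (fun k => (k : ℝ) * aOne k * aOne (m-k)) (m+1)]
  apply Finset.sum_congr rfl
  intro j hj
  simp only [Finset.mem_range] at hj
  have hjm : j ≤ m := Nat.lt_succ_iff.mp hj
  have h1 : m + 1 - 1 - j = m - j := by omega
  have h2 : m - (m - j) = j := by omega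
  rw [h1, h2]
  have : ((m - j : ℕ) : ℝ) = (m : ℝ) - j := by push_cast [Nat.cast_sub hjm]; ring
  rw [this]; ring

lemma convU_double (m : ℕ) : 2 * convU m = (m : ℝ) * convT m := by
  have h : convU m + convU m
      = ∑ k ∈ Finset.range (m+1),
        ((k : ℝ) * aOne k * aOne (m-k) + ((m : ℝ) - k) * aOne k * aOne (m-k)) := by
    nth_rewrite 1 [convU]
    nth_rewrite 1 [convU_refl m]
    rw [← Finset.sum_add_distrib]
  have h2 : convU m + convU m = (m : ℝ) * convT m := by
    rw [h, convT, Finset.mul_sum]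
    apply Finset.sum_congr rfl; intro k _; ring
  linarith

lemma convU_step (n : ℕ) : convU (n+1) = convU n + (1/2) * convT n := by
  rw [convU, Finset.sum_range_succ' (fun k => (k : ℝ) * aOne k * aOne (n+1-k)) (n+1)]
  simp only [Nat.cast_zero, zero_mul, add_zero]
  have hc : ∀ j ∈ Finset.range (n+1), ((j+1 : ℕ) : ℝ) * aOne (j+1) * aOne (n+1-(j+1))
      = ((j : ℝ) + 1/2) * aOne j * aOne (n-j) := by
    intro j hj
    have h1 : n + 1 - (j+1) = n - j := by omega
    push_cast
    rw [show ((j:ℝ)+1) * aOne (j+1) * aOne (n-j) = (((j:ℝ)+1) * aOne (j+1)) * aOne (n-j) by ring,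
      aOne_succ j]
  rw [Finset.sum_congr rfl hc]
  have : ∑ j ∈ Finset.range (n+1), ((j : ℝ) + 1/2) * aOne j * aOne (n-j)
      = (∑ j ∈ Finset.range (n+1), (j : ℝ) * aOne j * aOne (n-j))
        + (1/2) * ∑ j ∈ Finset.range (n+1), aOne j * aOne (n-j) := by
    rw [Finset.mul_sum, ← Finset.sum_add_distrib]
    apply Finset.sum_congr rfl; intro k _; ring
  rw [this, ← convU, ← convT]

lemma aOne_conv (n : ℕ) : ∑ k ∈ Finset.range (n+1), aOne k * aOne (n-k) = 1 := by
  suffices h : convT n = 1 by simpa [convT] using h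
  induction n with
  | zero => simp [convT, aOne_zero]
  | succ n ih =>
    have h1 : 2 * convU (n+1) = ((n:ℝ)+1) * convT (n+1) := by
      have := convU_double (n+1); push_cast at this; linarith
    have h2 := convU_double n
    have h3 := convU_step n
    have hne : ((n:ℝ)+1) ≠ 0 := by positivity
    have : ((n:ℝ)+1) * convT (n+1) = ((n:ℝ)+1) * 1 := by
      rw [← h1]
      have : 2 * convU (n+1) = 2 * convU n + convT n := by rw [h3]; ring
      rw [this, h2, ih]; ring
    exact mul_left_cancel₀ hne this

lemma solve_rec (p : ℕ → ℝ) (hp0 : p 0 = 1)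
    (hp : ∀ n, ∑ k ∈ Finset.range (n+1), p k * p (n-k) = 1) : ∀ n, p n = aOne n := by
  intro n
  induction n using Nat.strong_induction_on with
  | _ n IH =>
    match n with
    | 0 => simpa [aOne_zero] using hp0
    | (m+1) =>
      have key := hp (m+1)
      have keyA := aOne_conv (m+1)
      have expand : ∀ q : ℕ → ℝ, ∑ k ∈ Finset.range (m+1+1), q k * q (m+1-k)
          = q 0 * q (m+1) + (∑ j ∈ Finset.range m, q (j+1) * q (m+1-(j+1))) + q (m+1) * q 0 := by
        intro q
        rw [Finset.sum_range_succ, Finset.sum_range_succ' (fun k => q k * q (m+1-k)) m]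
        simp only [Nat.sub_self, Nat.sub_zero]
        ring
      rw [expand] at key keyA
      have hmid : ∑ j ∈ Finset.range m, p (j+1) * p (m+1-(j+1))
          = ∑ j ∈ Finset.range m, aOne (j+1) * aOne (m+1-(j+1)) := by
        apply Finset.sum_congr rfl
        intro j hj
        simp only [Finset.mem_range] at hj
        rw [IH (j+1) (by omega), IH (m+1-(j+1)) (by omega)]
      rw [hp0] at key
      rw [aOne_zero] at keyA
      rw [hmid] at key
      linarith

/-! ### Canonical space: partial sums of coordinates and the relevant events -/

/-- partial sum of the first `k` coordinates of `x : Fin m → ℝ` -/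
noncomputable def swS (m k : ℕ) (x : Fin m → ℝ) : ℝ :=
  ∑ i ∈ Finset.range k, if h : i < m then x ⟨i, h⟩ else 0

lemma measurable_swS (m k : ℕ) : Measurable (swS m k) := by
  apply Finset.measurable_sum
  intro i _
  by_cases h : i < m
  · simpa [h] using measurable_pi_apply (⟨i, h⟩ : Fin m)
  · simpa [h] using (measurable_const : Measurable (fun _ : Fin m → ℝ => (0:ℝ)))

def posSet (m : ℕ) : Set (Fin m → ℝ) := {x | ∀ k, 1 ≤ k → k ≤ m → 0 < swS m k x}
def negSet (m : ℕ) : Set (Fin m → ℝ) := {x | ∀ k, 1 ≤ k → k ≤ m → swS m k x < 0}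
def revSet (m : ℕ) : Set (Fin m → ℝ) := {x | ∀ j, j < m → 0 < swS m m x - swS m j x}

lemma measurableSet_posSet (m : ℕ) : MeasurableSet (posSet m) := by
  have : posSet m = ⋂ (k : ℕ), ⋂ (_ : 1 ≤ k), ⋂ (_ : k ≤ m), {x | 0 < swS m k x} := by
    ext x; simp [posSet, Set.mem_iInter]
  rw [this]
  exact MeasurableSet.iInter fun k => MeasurableSet.iInter fun _ => MeasurableSet.iInter fun _ =>
    measurableSet_lt measurable_const (measurable_swS m k)

lemma measurableSet_negSet (m : ℕ) : MeasurableSet (negSet m) := by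
  have : negSet m = ⋂ (k : ℕ), ⋂ (_ : 1 ≤ k), ⋂ (_ : k ≤ m), {x | swS m k x < 0} := by
    ext x; simp [negSet, Set.mem_iInter]
  rw [this]
  exact MeasurableSet.iInter fun k => MeasurableSet.iInter fun _ => MeasurableSet.iInter fun _ =>
    measurableSet_lt (measurable_swS m k) measurable_const

lemma measurableSet_revSet (m : ℕ) : MeasurableSet (revSet m) := by
  have : revSet m = ⋂ (j : ℕ), ⋂ (_ : j < m), {x | 0 < swS m m x - swS m j x} := by
    ext x; simp [revSet, Set.mem_iInter]
  rw [this]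
  exact MeasurableSet.iInter fun j => MeasurableSet.iInter fun _ =>
    measurableSet_lt measurable_const ((measurable_swS m m).sub (measurable_swS m j))

lemma swS_rev_sub (m j : ℕ) (hj : j ≤ m) (x : Fin m → ℝ) :
    swS m m (x ∘ Fin.revPerm) - swS m j (x ∘ Fin.revPerm) = swS m (m - j) x := by
  have hIco : swS m m (x ∘ Fin.revPerm) - swS m j (x ∘ Fin.revPerm)
      = ∑ i ∈ Finset.Ico j m, (if h : i < m then (x ∘ Fin.revPerm) ⟨i, h⟩ else 0) := by
    rw [swS, swS, eq_comm, Finset.sum_Ico_eq_sub _ hj]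
  rw [hIco, swS]
  refine Finset.sum_bij' (fun i _ => m - 1 - i) (fun l _ => m - 1 - l) ?_ ?_ ?_ ?_ ?_
  · intro a ha; simp only [Finset.mem_Ico] at ha; simp only [Finset.mem_range]; omega
  · intro a ha; simp only [Finset.mem_range] at ha; simp only [Finset.mem_Ico]; omega
  · intro a ha; simp only [Finset.mem_Ico] at ha; show m - 1 - (m - 1 - a) = a; omega
  · intro a ha; simp only [Finset.mem_range] at ha; show m - 1 - (m - 1 - a) = a; omega
  · intro a ha
    simp only [Finset.mem_Ico] at ha
    have h1 : a < m := ha.2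
    have h2 : m - 1 - a < m := by omega
    rw [dif_pos h1, dif_pos h2]
    simp only [Function.comp]
    congr 1
    ext
    simp only [Fin.revPerm, Equiv.coe_fn_mk, Function.Involutive.coe_toPerm, Fin.val_rev]
    omega

lemma swS_neg (m k : ℕ) (x : Fin m → ℝ) : swS m k (fun i => -(x i)) = - swS m k x := by
  rw [swS, swS, ← Finset.sum_neg_distrib]
  apply Finset.sum_congr rfl
  intro i _
  by_cases h : i < m <;> simp [h]

section CanonMeasure

variable (ν : Measure ℝ) [IsProbabilityMeasure ν]

/-- permutations of coordinates preserve the product measure -/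
lemma pi_map_comp_equiv (m : ℕ) (e : Fin m ≃ Fin m) :
    Measure.map (fun x : Fin m → ℝ => x ∘ e) (Measure.pi fun _ => ν)
      = Measure.pi fun _ => ν := by
  have hmeas : Measurable (fun x : Fin m → ℝ => x ∘ e) :=
    measurable_pi_iff.mpr fun i => measurable_pi_apply (e i)
  refine (Measure.pi_eq fun s hs => ?_).symm
  rw [Measure.map_apply hmeas (MeasurableSet.univ_pi hs)]
  have : (fun x : Fin m → ℝ => x ∘ e) ⁻¹' Set.pi Set.univ s
      = Set.pi Set.univ (fun i => s (e.symm i)) := by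
    ext x
    simp only [Set.mem_preimage, Set.mem_pi, Set.mem_univ, forall_true_left, Function.comp]
    constructor
    · intro h i; have := h (e.symm i); simpa using this
    · intro h i; have := h (e i); simpa using this
  rw [this, Measure.pi_pi]
  exact Equiv.prod_comp e.symm fun i => ν (s i)

lemma pi_revSet_eq (m : ℕ) :
    (Measure.pi fun _ : Fin m => ν) (revSet m) = (Measure.pi fun _ : Fin m => ν) (posSet m) := by
  set e : Fin m ≃ Fin m := Fin.revPerm with he
  have hmap := pi_map_comp_equiv ν m e
  have hR : Measurable (fun x : Fin m → ℝ => x ∘ e) :=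
    measurable_pi_iff.mpr fun i => measurable_pi_apply (e i)
  have hpre : (fun x : Fin m → ℝ => x ∘ e) ⁻¹' revSet m = posSet m := by
    ext x
    simp only [Set.mem_preimage, revSet, posSet, Set.mem_setOf_eq]
    constructor
    · intro h k hk1 hkm
      have hj : m - k < m := by omega
      have := h (m - k) hj
      rw [he, swS_rev_sub m (m - k) (by omega) x, show m - (m - k) = k by omega] at this
      exact this
    · intro h j hj
      rw [he, swS_rev_sub m j (by omega) x]
      exact h (m - j) (by omega) (by omega)
  calc (Measure.pi fun _ : Fin m => ν) (revSet m)
      = (Measure.map (fun x : Fin m → ℝ => x ∘ e) (Measure.pi fun _ => ν)) (revSet m) := by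
        rw [hmap]
    _ = (Measure.pi fun _ : Fin m => ν) ((fun x : Fin m → ℝ => x ∘ e) ⁻¹' revSet m) := by
        rw [Measure.map_apply hR (measurableSet_revSet m)]
    _ = _ := by rw [hpre]

lemma pi_negSet_eq (hν : Measure.map Neg.neg ν = ν) (m : ℕ) :
    (Measure.pi fun _ : Fin m => ν) (negSet m) = (Measure.pi fun _ : Fin m => ν) (posSet m) := by
  have hmp : MeasurePreserving (fun x : Fin m → ℝ => fun i => -(x i))
      (Measure.pi fun _ => ν) (Measure.pi fun _ => ν) :=
    measurePreserving_pi _ _ (fun _ => ⟨measurable_neg, hν⟩)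
  have hpre : (fun x : Fin m → ℝ => fun i => -(x i)) ⁻¹' posSet m = negSet m := by
    ext x
    simp only [Set.mem_preimage, posSet, negSet, Set.mem_setOf_eq]
    constructor
    · intro h k h1 h2
      have := h k h1 h2
      rw [swS_neg] at this
      linarith
    · intro h k h1 h2
      rw [swS_neg]
      have := h k h1 h2
      linarith
  rw [← hpre, hmp.measure_preimage (measurableSet_posSet m).nullMeasurableSet]

end CanonMeasure

/-! ### Random walk part -/

section Walk

variable {Ω : Type*} [MeasurableSpace Ω] (μ : Measure Ω) [IsProbabilityMeasure μ]
    (X : ℕ → Ω → ℝ)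

/-- the tuple of `m` increments starting at time `o` -/
def tupX (o m : ℕ) : Ω → Fin m → ℝ := fun ω i => X (o + i) ω

/-- partial sums of the walk -/
noncomputable def walkS (j : ℕ) (ω : Ω) : ℝ := ∑ i ∈ Finset.range j, X i ω

lemma measurable_tupX (hmeas : ∀ i, Measurable (X i)) (o m : ℕ) :
    Measurable (tupX X o m) := measurable_pi_iff.mpr fun _ => hmeas _

lemma map_tuple_eq_pi (hmeas : ∀ i, Measurable (X i))
    (hindep : iIndepFun X μ)
    (hident : ∀ i, Measure.map (X i) μ = Measure.map (X 0) μ) (k m : ℕ) :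
    Measure.map (tupX X k m) μ = Measure.pi (fun _ : Fin m => Measure.map (X 0) μ) := by
  classical
  set ν : Measure ℝ := Measure.map (X 0) μ with hν
  haveI : IsProbabilityMeasure ν := Measure.isProbabilityMeasure_map (hmeas 0).aemeasurable
  have htuple : Measurable (tupX X k m) := measurable_tupX X hmeas k m
  refine (Measure.pi_eq fun s hs => ?_).symm
  rw [Measure.map_apply htuple (MeasurableSet.univ_pi hs)]
  set s' : ℕ → Set ℝ := fun i => if h : i < m then s ⟨i, h⟩ else Set.univ with hs'
  have hs'meas : ∀ i, MeasurableSet (s' i) := by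
    intro i
    by_cases h : i < m
    · simpa [hs', h] using hs ⟨i, h⟩
    · simp [hs', h]
  have hsets : ∀ j : ℕ, MeasurableSet (s' (j - k)) := fun j => hs'meas _
  have hpre : tupX X k m ⁻¹' Set.pi Set.univ s
      = ⋂ j ∈ Finset.image (fun i => k + i) (Finset.range m), X j ⁻¹' s' (j - k) := by
    ext ω
    simp only [Set.mem_preimage, Set.mem_pi, Set.mem_univ, forall_true_left,
      Finset.set_biInter_finset_image, Set.mem_iInter, Finset.mem_range, tupX]
    constructor
    · intro h i hi
      have : k + i - k = i := by omega
      rw [this]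
      simpa [hs', hi] using h ⟨i, hi⟩
    · intro h i
      have hi := i.isLt
      have := h i.val hi
      have h2 : k + i.val - k = i.val := by omega
      rw [h2] at this
      simpa [hs', hi] using this
  rw [hpre]
  rw [hindep.measure_inter_preimage_eq_mul _ (fun j _ => hsets j),
    Finset.prod_image (fun a _ b _ h => Nat.add_left_cancel h)]
  have hterm : ∀ i ∈ Finset.range m,
      μ (X (k + i) ⁻¹' s' (k + i - k)) = (fun i => if h : i < m then ν (s ⟨i, h⟩) else 1) i := by
    intro i hi
    simp only [Finset.mem_range] at hi
    have h2 : k + i - k = i := by omega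
    dsimp only
    rw [h2, dif_pos hi]
    rw [show s' i = s ⟨i, hi⟩ from by simp [hs', hi]]
    rw [← Measure.map_apply (hmeas (k+i)) (hs ⟨i, hi⟩), hident (k+i)]
  rw [Finset.prod_congr rfl hterm, ← Fin.prod_univ_eq_prod_range]
  apply Finset.prod_congr rfl
  intro i _
  simp [i.isLt]

lemma indep_blocks (hmeas : ∀ i, Measurable (X i))
    (hindep : iIndepFun X μ) (k m : ℕ) :
    IndepFun (tupX X 0 k) (tupX X k m) μ := by
  classical
  have hdisj : Disjoint (Finset.range k) (Finset.Ico k (k + m)) := by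
    rw [Finset.disjoint_left]
    intro a ha hb
    simp only [Finset.mem_range] at ha
    simp only [Finset.mem_Ico] at hb
    omega
  have h := hindep.indepFun_finset (Finset.range k) (Finset.Ico k (k + m)) hdisj hmeas
  have hg1 : Measurable (fun (v : (j : ↥(Finset.range k)) → ℝ) (i : Fin k) =>
      v ⟨i.val, Finset.mem_range.mpr i.isLt⟩) :=
    measurable_pi_iff.mpr fun i => measurable_pi_apply _
  have hg2 : Measurable (fun (v : (j : ↥(Finset.Ico k (k + m))) → ℝ) (i : Fin m) =>
      v ⟨k + i.val, Finset.mem_Ico.mpr ⟨Nat.le_add_right _ _, by omega⟩⟩) :=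
    measurable_pi_iff.mpr fun i => measurable_pi_apply _
  have hcomp := h.comp hg1 hg2
  have he1 : ((fun (v : (j : ↥(Finset.range k)) → ℝ) (i : Fin k) =>
      v ⟨i.val, Finset.mem_range.mpr i.isLt⟩) ∘ (fun a (i : ↥(Finset.range k)) => X i a))
      = tupX X 0 k := by
    funext ω i; simp [tupX, Function.comp]
  have he2 : ((fun (v : (j : ↥(Finset.Ico k (k + m))) → ℝ) (i : Fin m) =>
      v ⟨k + i.val, Finset.mem_Ico.mpr ⟨Nat.le_add_right _ _, by omega⟩⟩)
      ∘ (fun a (i : ↥(Finset.Ico k (k + m))) => X i a)) = tupX X k m := by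
    funext ω i; simp [tupX, Function.comp]
  rwa [he1, he2] at hcomp

lemma tie_null (hmeas : ∀ i, Measurable (X i))
    (hindep : iIndepFun X μ)
    (hident : ∀ i, Measure.map (X i) μ = Measure.map (X 0) μ)
    (hatomless : ∀ c : ℝ, μ (X 0 ⁻¹' {c}) = 0)
    (i j : ℕ) (hij : i < j) :
    μ {ω | ∑ l ∈ Finset.Ico i j, X l ω = 0} = 0 := by
  classical
  set ν : Measure ℝ := Measure.map (X 0) μ with hν
  haveI : IsProbabilityMeasure ν := Measure.isProbabilityMeasure_map (hmeas 0).aemeasurable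
  have hνs : ∀ c : ℝ, ν {c} = 0 := by
    intro c
    rw [hν, Measure.map_apply (hmeas 0) (measurableSet_singleton c)]
    exact hatomless c
  set Z : Ω → ℝ := fun ω => ∑ l ∈ Finset.Ico (i+1) j, X l ω with hZ
  have hZmeas : Measurable Z := Finset.measurable_sum _ (fun l _ => hmeas l)
  have hZY : IndepFun Z (X i) μ := by
    have h := hindep.indepFun_finsetSum_of_notMem hmeas
      (s := Finset.Ico (i+1) j) (i := i) (by simp)
    have : Z = ∑ l ∈ Finset.Ico (i+1) j, X l := by
      funext ω; rw [hZ]; simp [Finset.sum_apply]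
    rwa [this]
  have hD : MeasurableSet {p : ℝ × ℝ | p.1 + p.2 = 0} :=
    (measurable_fst.add measurable_snd) (measurableSet_singleton 0)
  have hset : {ω | ∑ l ∈ Finset.Ico i j, X l ω = 0}
      = (fun ω => (Z ω, X i ω)) ⁻¹' {p : ℝ × ℝ | p.1 + p.2 = 0} := by
    ext ω
    simp only [Set.mem_setOf_eq, Set.mem_preimage, hZ]
    rw [Finset.sum_eq_sum_Ico_succ_bot hij]
    constructor <;> intro h <;> linarith
  rw [hset, ← Measure.map_apply ((hZmeas.prodMk (hmeas i))) hD]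
  rw [(indepFun_iff_map_prod_eq_prod_map_map hZmeas.aemeasurable
    (hmeas i).aemeasurable).mp hZY]
  rw [hident i]
  haveI : IsProbabilityMeasure (Measure.map Z μ) :=
    Measure.isProbabilityMeasure_map hZmeas.aemeasurable
  rw [Measure.prod_apply hD]
  have hslice : ∀ z : ℝ, ν (Prod.mk z ⁻¹' {p : ℝ × ℝ | p.1 + p.2 = 0}) = 0 := by
    intro z
    have : Prod.mk z ⁻¹' {p : ℝ × ℝ | p.1 + p.2 = 0} = {-z} := by
      ext y
      simp only [Set.mem_preimage, Set.mem_setOf_eq, Set.mem_singleton_iff]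
      constructor <;> intro h <;> linarith
    rw [this]
    exact hνs (-z)
  calc ∫⁻ z, ν (Prod.mk z ⁻¹' {p : ℝ × ℝ | p.1 + p.2 = 0}) ∂(Measure.map Z μ)
      = ∫⁻ _, 0 ∂(Measure.map Z μ) := by
        apply lintegral_congr
        intro z; exact hslice z
    _ = 0 := lintegral_zero

lemma swS_tupX (o m k : ℕ) (hk : k ≤ m) (ω : Ω) :
    swS m k (tupX X o m ω) = ∑ i ∈ Finset.range k, X (o + i) ω := by
  unfold swS tupX
  apply Finset.sum_congr rfl
  intro i hi
  rw [dif_pos (lt_of_lt_of_le (Finset.mem_range.mp hi) hk)]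

lemma sum_shift (k j : ℕ) (ω : Ω) :
    ∑ i ∈ Finset.range j, X (k + i) ω = walkS X (k + j) ω - walkS X k ω := by
  have h1 : ∑ l ∈ Finset.Ico k (k+j), X l ω = walkS X (k+j) ω - walkS X k ω :=
    Finset.sum_Ico_eq_sub _ (Nat.le_add_right k j)
  have h2 : ∑ l ∈ Finset.Ico k (k+j), X l ω = ∑ i ∈ Finset.range j, X (k+i) ω := by
    rw [Finset.sum_Ico_eq_sum_range]
    simp
  rw [← h2, h1]

/-- the event that the walk is strictly maximal at time `k` among times `0,…,n` -/
def maxEvent (n k : ℕ) : Set Ω :=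
  (tupX X 0 k ⁻¹' revSet k) ∩ (tupX X k (n - k) ⁻¹' negSet (n - k))

lemma maxEvent_mem (n k : ℕ) (hk : k ≤ n) (ω : Ω) :
    ω ∈ maxEvent X n k ↔ ∀ i, i ≤ n → i ≠ k → walkS X i ω < walkS X k ω := by
  have h0 : ∀ j, j ≤ k → swS k j (tupX X 0 k ω) = walkS X j ω := by
    intro j hj
    rw [swS_tupX X 0 k j hj ω]
    apply Finset.sum_congr rfl
    intro i _
    rw [Nat.zero_add]
  have hA : tupX X 0 k ω ∈ revSet k ↔ ∀ j, j < k → walkS X j ω < walkS X k ω := by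
    simp only [revSet, Set.mem_setOf_eq]
    constructor
    · intro h j hj
      have := h j hj
      rw [h0 k le_rfl, h0 j (le_of_lt hj)] at this
      linarith
    · intro h j hj
      rw [h0 k le_rfl, h0 j (le_of_lt hj)]
      have := h j hj
      linarith
  have hB : tupX X k (n-k) ω ∈ negSet (n-k) ↔
      ∀ i, k < i → i ≤ n → walkS X i ω < walkS X k ω := by
    simp only [negSet, Set.mem_setOf_eq]
    constructor
    · intro h i hki hin
      have hj1 : 1 ≤ i - k := by omega
      have hj2 : i - k ≤ n - k := by omega
      have := h (i-k) hj1 hj2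
      rw [swS_tupX X k (n-k) (i-k) hj2 ω, sum_shift X k (i-k) ω,
        show k + (i-k) = i by omega] at this
      linarith
    · intro h j hj1 hj2
      rw [swS_tupX X k (n-k) j hj2 ω, sum_shift X k j ω]
      have := h (k+j) (by omega) (by omega)
      linarith
  rw [maxEvent, Set.mem_inter_iff, Set.mem_preimage, Set.mem_preimage, hA, hB]
  constructor
  · rintro ⟨h1, h2⟩ i hin hik
    rcases lt_or_gt_of_ne hik with h | h
    · exact h1 i h
    · exact h2 i h hin
  · intro h
    refine ⟨fun j hj => h j (by omega) (by omega), fun i hki hin => h i hin (by omega)⟩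

lemma measurableSet_maxEvent (hmeas : ∀ i, Measurable (X i)) (n k : ℕ) :
    MeasurableSet (maxEvent X n k) :=
  ((measurable_tupX X hmeas 0 k) (measurableSet_revSet k)).inter
    ((measurable_tupX X hmeas k (n-k)) (measurableSet_negSet (n-k)))

lemma measure_maxEvent (hmeas : ∀ i, Measurable (X i))
    (hindep : iIndepFun X μ)
    (hident : ∀ i, Measure.map (X i) μ = Measure.map (X 0) μ)
    (hsymm : Measure.map (X 0) μ = Measure.map (fun ω => -(X 0 ω)) μ)
    (n k : ℕ) :
    μ (maxEvent X n k)
      = (Measure.pi fun _ : Fin k => Measure.map (X 0) μ) (posSet k)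
        * (Measure.pi fun _ : Fin (n-k) => Measure.map (X 0) μ) (posSet (n-k)) := by
  classical
  set ν : Measure ℝ := Measure.map (X 0) μ with hν
  haveI : IsProbabilityMeasure ν := Measure.isProbabilityMeasure_map (hmeas 0).aemeasurable
  have hνneg : Measure.map Neg.neg ν = ν := by
    rw [hν, Measure.map_map measurable_neg (hmeas 0)]
    have : Neg.neg ∘ X 0 = fun ω => -(X 0 ω) := rfl
    rw [this]
    exact hsymm.symm
  have hind := indep_blocks μ X hmeas hindep k (n-k)
  rw [maxEvent, hind.measure_inter_preimage_eq_mul _ _ (measurableSet_revSet k)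
    (measurableSet_negSet (n-k))]
  rw [← Measure.map_apply (measurable_tupX X hmeas 0 k) (measurableSet_revSet k),
    ← Measure.map_apply (measurable_tupX X hmeas k (n-k)) (measurableSet_negSet (n-k))]
  rw [map_tuple_eq_pi μ X hmeas hindep hident 0 k,
    map_tuple_eq_pi μ X hmeas hindep hident k (n-k)]
  rw [pi_revSet_eq ν k, pi_negSet_eq ν hνneg (n-k)]

lemma conv_prob (hmeas : ∀ i, Measurable (X i))
    (hindep : iIndepFun X μ)
    (hident : ∀ i, Measure.map (X i) μ = Measure.map (X 0) μ)
    (hsymm : Measure.map (X 0) μ = Measure.map (fun ω => -(X 0 ω)) μ)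
    (hatomless : ∀ c : ℝ, μ (X 0 ⁻¹' {c}) = 0) (n : ℕ) :
    ∑ k ∈ Finset.range (n+1),
      (Measure.pi fun _ : Fin k => Measure.map (X 0) μ) (posSet k)
        * (Measure.pi fun _ : Fin (n-k) => Measure.map (X 0) μ) (posSet (n-k)) = 1 := by
  classical
  -- the bad (tie) event
  set Bad : Set Ω := ⋃ (p : ℕ × ℕ), ⋃ (_ : p.1 < p.2 ∧ p.2 ≤ n),
    {ω | walkS X p.2 ω = walkS X p.1 ω} with hBadDef
  have hBadNull : μ Bad = 0 := by
    rw [hBadDef]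
    refine measure_iUnion_null fun p => ?_
    by_cases hp : p.1 < p.2 ∧ p.2 ≤ n
    · have hset : {ω | walkS X p.2 ω = walkS X p.1 ω}
          = {ω | ∑ l ∈ Finset.Ico p.1 p.2, X l ω = 0} := by
        ext ω
        simp only [Set.mem_setOf_eq]
        have h1 : ∑ l ∈ Finset.Ico p.1 p.2, X l ω = walkS X p.2 ω - walkS X p.1 ω :=
          Finset.sum_Ico_eq_sub _ (le_of_lt hp.1)
        rw [h1]
        constructor <;> intro h <;> linarith
      refine measure_mono_null (Set.iUnion_subset fun _ => subset_rfl) ?_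
      rw [hset]
      exact tie_null μ X hmeas hindep hident hatomless p.1 p.2 hp.1
    · simp [hp]
  -- the good events cover up to the bad event
  have hcover : Set.univ ⊆ Bad ∪ ⋃ k ∈ Finset.range (n+1), maxEvent X n k := by
    intro ω _
    by_cases hb : ω ∈ Bad
    · exact Or.inl hb
    · right
      have hdist : ∀ i j, i < j → j ≤ n → walkS X i ω ≠ walkS X j ω := by
        intro i j h1 h2 heq
        exact hb (Set.mem_iUnion.2 ⟨(i, j), Set.mem_iUnion.2 ⟨⟨h1, h2⟩, heq.symm⟩⟩)
      obtain ⟨k, hkmem, hkmax⟩ := Finset.exists_max_image (Finset.range (n+1))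
        (fun j => walkS X j ω) ⟨0, by simp⟩
      have hkn : k ≤ n := Nat.lt_succ_iff.mp (Finset.mem_range.mp hkmem)
      refine Set.mem_biUnion hkmem ((maxEvent_mem X n k hkn ω).2 ?_)
      intro i hin hik
      have hle : walkS X i ω ≤ walkS X k ω := hkmax i (Finset.mem_range.mpr (by omega))
      rcases lt_or_gt_of_ne hik with h | h
      · exact lt_of_le_of_ne hle (hdist i k h hkn)
      · exact lt_of_le_of_ne hle fun heq => (hdist k i h hin) heq.symm
  have hdisj : (↑(Finset.range (n+1)) : Set ℕ).PairwiseDisjoint (maxEvent X n) := by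
    intro a ha b hb hab
    simp only [Finset.coe_range, Set.mem_Iio] at ha hb
    rw [Function.onFun, Set.disjoint_left]
    intro ω hωa hωb
    have h1 := (maxEvent_mem X n a (by omega) ω).1 hωa b (by omega) (Ne.symm hab)
    have h2 := (maxEvent_mem X n b (by omega) ω).1 hωb a (by omega) hab
    linarith
  have hunion : μ (⋃ k ∈ Finset.range (n+1), maxEvent X n k) = 1 := by
    refine le_antisymm prob_le_one ?_
    calc (1 : ℝ≥0∞) = μ Set.univ := measure_univ.symm
      _ ≤ μ (Bad ∪ ⋃ k ∈ Finset.range (n+1), maxEvent X n k) := measure_mono hcover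
      _ ≤ μ Bad + μ (⋃ k ∈ Finset.range (n+1), maxEvent X n k) := measure_union_le _ _
      _ = μ (⋃ k ∈ Finset.range (n+1), maxEvent X n k) := by rw [hBadNull, zero_add]
  rw [← hunion, measure_biUnion_finset hdisj (fun k _ => measurableSet_maxEvent X hmeas n k)]
  exact Finset.sum_congr rfl fun k _ =>
    (measure_maxEvent μ X hmeas hindep hident hsymm n k).symm

end Walk

/-- For a random walk with i.i.d. symmetric atomless increments,
`P(τ₀ > n) = (-1)^n * C(-1/2, n)` where `τ₀ = inf{k ≥ 1 : S_k ≤ 0}`. -/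
theorem stmt_4 {Ω : Type*} [MeasurableSpace Ω] (μ : Measure Ω) [IsProbabilityMeasure μ]
    (X : ℕ → Ω → ℝ)
    (hmeas : ∀ i, Measurable (X i))
    (hindep : iIndepFun X μ)
    (hident : ∀ i, Measure.map (X i) μ = Measure.map (X 0) μ)
    (hsymm : Measure.map (X 0) μ = Measure.map (fun ω => -(X 0 ω)) μ)
    (hatomless : ∀ c : ℝ, μ (X 0 ⁻¹' {c}) = 0)
    (n : ℕ) :
    (μ {ω | ∀ k : ℕ, 1 ≤ k → k ≤ n → 0 < ∑ i ∈ Finset.range k, X i ω}).toReal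
      = aOne n := by
  classical
  set ν : Measure ℝ := Measure.map (X 0) μ with hν
  haveI : IsProbabilityMeasure ν := Measure.isProbabilityMeasure_map (hmeas 0).aemeasurable
  set Pp : ℕ → ℝ≥0∞ := fun m => (Measure.pi fun _ : Fin m => ν) (posSet m) with hPp
  have hfin : ∀ m, Pp m ≠ ⊤ := fun m => measure_ne_top _ _
  set p : ℕ → ℝ := fun m => (Pp m).toReal with hp
  have hp0 : p 0 = 1 := by
    have hps : posSet 0 = Set.univ := by
      ext x
      simp only [posSet, Set.mem_setOf_eq, Set.mem_univ, iff_true]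
      intro k h1 h2
      omega
    rw [hp]
    simp only [hPp, hps, measure_univ, ENNReal.toReal_one]
  have hrec : ∀ N : ℕ, ∑ k ∈ Finset.range (N+1), p k * p (N-k) = 1 := by
    intro N
    have hconv := conv_prob μ X hmeas hindep hident hsymm hatomless N
    have : ∑ k ∈ Finset.range (N+1), p k * p (N-k)
        = (∑ k ∈ Finset.range (N+1), Pp k * Pp (N-k)).toReal := by
      rw [ENNReal.toReal_sum (fun k _ => ENNReal.mul_ne_top (hfin k) (hfin (N-k)))]
      exact Finset.sum_congr rfl fun k _ => (ENNReal.toReal_mul).symm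
    rw [this, hconv, ENNReal.toReal_one]
  have hsolve := solve_rec p hp0 hrec n
  have hset : {ω | ∀ k : ℕ, 1 ≤ k → k ≤ n → 0 < ∑ i ∈ Finset.range k, X i ω}
      = tupX X 0 n ⁻¹' posSet n := by
    ext ω
    simp only [Set.mem_setOf_eq, Set.mem_preimage, posSet]
    constructor
    · intro h k h1 h2
      rw [swS_tupX X 0 n k h2 ω]
      have := h k h1 h2
      calc (0:ℝ) < ∑ i ∈ Finset.range k, X i ω := this
        _ = ∑ i ∈ Finset.range k, X (0 + i) ω :=
          Finset.sum_congr rfl fun i _ => by rw [Nat.zero_add]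
    · intro h k h1 h2
      have := h k h1 h2
      rw [swS_tupX X 0 n k h2 ω] at this
      calc (0:ℝ) < ∑ i ∈ Finset.range k, X (0 + i) ω := this
        _ = ∑ i ∈ Finset.range k, X i ω :=
          Finset.sum_congr rfl fun i _ => by rw [Nat.zero_add]
  rw [hset, ← Measure.map_apply (measurable_tupX X hmeas 0 n) (measurableSet_posSet n),
    map_tuple_eq_pi μ X hmeas hindep hident 0 n]
  exact hsolve
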